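/- Let k = F_{q^n}, R = k{τ}, and let φ: F_q[T] → R be the Drinfeld module defined by φ_T = τ^n. Let p ∈ F_q[T] be a monic irreducible polynomial of degree s with p ≠ T. Then every nonzero twisted polynomial u ∈ R with deg_τ(u) ≤ s−1 acts invertibly on the p-torsion module φ[p]; i.e., u(x) has no nonzero root among the roots of φ_p(x). -/

import Mathlib

/-- The twisted polynomial ring `R = k{τ}` over `k = F_{q^n}`, axiomatized. -/
structure TwistedPolynomialRing (q : ℕ) (k : Type) [Field k] (R : Type) [Ring R] [Module k R] where
  ι : k →+* R
  τ : R
  tau_comm : ∀ a : k, τ * ι a = ι (a ^ q) * τ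
  smul_def : ∀ (a : k) (r : R), a • r = ι a * r
  basis : Module.Basis ℕ k R
  basis_eq : ∀ i : ℕ, basis i = τ ^ i

variable {q : ℕ} {k R : Type} [Field k] [Ring R] [Module k R]

/-- The action of a twisted polynomial `f = Σ aᵢ τ^i` as the `F_q`-linear
polynomial `x ↦ Σ aᵢ x^{q^i}` on a `k`-algebra `Ω`. -/
noncomputable def TwistedPolynomialRing.act (T : TwistedPolynomialRing q k R)
    {Ω : Type} [CommRing Ω] [Algebra k Ω] (f : R) (x : Ω) : Ω :=
  (T.basis.repr f).sum fun i a => algebraMap k Ω a * x ^ q ^ i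

/-!
Let `σ` be the `q^n`-th power Frobenius of `Ω`, an `F_q`-linear map. A root `β` of `φ_p` is
a root of `p(σ)`, and `u`, whose coefficients lie in `F_{q^n}`, is an `F_q`-linear map
commuting with `σ`. As `p` is irreducible and `β ≠ 0`, the map `g ↦ g(σ) β` is injective on
the `q^s` polynomials of degree `< s`, so if `u(β) = 0` then `u` vanishes at `q^s` points.
But `u(x)` is a nonzero polynomial of degree `< q^s`.
-/

open Polynomial

section CyclicSubmodule

variable {F V : Type*} [Field F] [AddCommGroup V] [Module F V] {σ : Module.End F V} {p : F[X]}
  {β : V}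

theorem aeval_apply_ne_zero_of_degree_lt (hp : Irreducible p) (hβ : β ≠ 0)
    (hpβ : aeval σ p β = 0) {g : F[X]} (hg : g ≠ 0) (hgp : g.degree < p.degree) :
    aeval σ g β ≠ 0 := by
  obtain ⟨a, b, hab⟩ := hp.coprime_iff_not_dvd.mpr fun hpg =>
    hg (eq_zero_of_dvd_of_degree_lt hpg hgp)
  intro hgβ
  apply hβ
  calc β = aeval σ (a * p + b * g) β := by rw [hab, map_one, Module.End.one_apply]
    _ = 0 := by simp [Module.End.mul_apply, hpβ, hgβ]

theorem pow_natDegree_le_ncard_ker [Fintype F] {U : Module.End F V} (hUσ : Commute U σ)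
    (hp : Irreducible p) (hβ : β ≠ 0) (hpβ : aeval σ p β = 0) (hUβ : U β = 0)
    (hker : (LinearMap.ker U : Set V).Finite) :
    Fintype.card F ^ p.natDegree ≤ (LinearMap.ker U : Set V).ncard := by
  have hcard : (degreeLT F p.natDegree : Set F[X]).ncard = Fintype.card F ^ p.natDegree := by
    rw [← Nat.card_coe_set_eq, SetLike.coe_sort_coe,
      Nat.card_congr (degreeLTEquiv F _).toEquiv, Nat.card_fun, Nat.card_eq_fintype_card,
      Nat.card_fin]
  rw [← hcard]
  refine Set.ncard_le_ncard_of_injOn (fun g => aeval σ g β) (fun g _ => ?_)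
    (fun g hg g' hg' hgg' => ?_) hker
  · have hcomm : Commute U (aeval σ g) := by
      rw [aeval_eq_smeval]
      exact (smeval_commute_left F g hUσ.symm).symm
    show U (aeval σ g β) = 0
    rw [← Module.End.mul_apply, hcomm.eq, Module.End.mul_apply, hUβ, map_zero]
  · by_contra hne
    have hdeg : (g - g').degree < p.degree := by
      rw [degree_eq_natDegree hp.ne_zero]
      exact mem_degreeLT.1 (Submodule.sub_mem _ hg hg')
    exact aeval_apply_ne_zero_of_degree_lt hp hβ hpβ (sub_ne_zero.mpr hne) hdeg
      (by simpa [sub_eq_zero] using hgg')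

end CyclicSubmodule

namespace TwistedPolynomialRing

variable (T : TwistedPolynomialRing q k R) {Ω : Type} [CommRing Ω] [Algebra k Ω]

theorem act_eq_linearCombination (f : R) (x : Ω) :
    T.act f x = Finsupp.linearCombination k (fun i => x ^ q ^ i) (T.basis.repr f) :=
  Finsupp.sum_congr fun _ _ => (Algebra.smul_def _ _).symm

theorem repr_ι_mul_τ_pow (a : k) (m : ℕ) :
    T.basis.repr (T.ι a * T.τ ^ m) = Finsupp.single m a := by
  rw [← T.smul_def, ← T.basis_eq, map_smul, T.basis.repr_self, Finsupp.smul_single_one]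

variable (Ω) in
noncomputable def actPoly (f : R) : Polynomial Ω :=
  (T.basis.repr f).sum fun i a => C (algebraMap k Ω a) * X ^ q ^ i

theorem eval_actPoly (f : R) (x : Ω) : (T.actPoly Ω f).eval x = T.act f x := by
  simp [actPoly, act, Finsupp.sum, eval_finsetSum]

theorem actPoly_mem_degreeLT (hq : 1 < q) {f : R} {s : ℕ}
    (hf : ∀ i, s ≤ i → T.basis.repr f i = 0) : T.actPoly Ω f ∈ degreeLT Ω (q ^ s) :=
  Submodule.sum_mem _ fun i hi => mem_degreeLT.2 <| (degree_C_mul_X_pow_le _ _).trans_lt <| by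
    exact_mod_cast Nat.pow_lt_pow_right hq (not_le.1 fun h => Finsupp.mem_support_iff.1 hi (hf i h))

theorem coeff_actPoly_pow (hq : 1 < q) (f : R) (i : ℕ) :
    (T.actPoly Ω f).coeff (q ^ i) = algebraMap k Ω (T.basis.repr f i) := by
  simp +contextual [actPoly, Finsupp.sum, finsetSum_coeff, (Nat.pow_right_injective hq).eq_iff]

theorem actPoly_ne_zero [Nontrivial Ω] (hq : 1 < q) {f : R} (hf : f ≠ 0) :
    T.actPoly Ω f ≠ 0 := by
  obtain ⟨i, hi⟩ : ∃ i, T.basis.repr f i ≠ 0 := by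
    by_contra! h
    exact hf (T.basis.repr.injective (by ext i; simpa using h i))
  intro h
  apply hi
  rw [← (algebraMap k Ω).injective.eq_iff, ← T.coeff_actPoly_pow hq, h, coeff_zero, map_zero]

end TwistedPolynomialRing

section Frobenius

variable {F Ω : Type} [Field F] [Fintype F] [CommRing Ω] [Algebra F Ω]

local notation "Frob" => AlgHom.toLinearMap (FiniteField.frobeniusAlgHom F Ω)

variable (F) in
theorem frobenius_pow_apply (m : ℕ) (x : Ω) : (Frob ^ m) x = x ^ Fintype.card F ^ m := by
  rw [Module.End.pow_apply, AlgHom.coe_toLinearMap, FiniteField.coe_frobeniusAlgHom,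
    pow_iterate]

theorem commute_mulLeft_frobenius_pow {n : ℕ} {a : Ω} (ha : a ^ Fintype.card F ^ n = a) :
    Commute (LinearMap.mulLeft F a) (Frob ^ n) :=
  LinearMap.ext fun x => by
    simp only [Module.End.mul_apply, LinearMap.mulLeft_apply, frobenius_pow_apply, mul_pow, ha]

namespace TwistedPolynomialRing

variable [Algebra k Ω] (T : TwistedPolynomialRing (Fintype.card F) k R)

theorem act_eval₂_τ_pow [Algebra F k] [IsScalarTower F k Ω] (n : ℕ) (p : F[X]) (x : Ω) :
    T.act (p.eval₂ (T.ι.comp (algebraMap F k)) (T.τ ^ n)) x = aeval (Frob ^ n) p x := by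
  rw [act_eq_linearCombination, eval₂_eq_sum, aeval_def, eval₂_eq_sum, sum_def, sum_def,
    map_sum, map_sum, LinearMap.sum_apply]
  refine Finset.sum_congr rfl fun i _ => ?_
  rw [RingHom.comp_apply, ← pow_mul, repr_ι_mul_τ_pow, Finsupp.linearCombination_single,
    Module.End.mul_apply, Module.algebraMap_end_apply, ← pow_mul, frobenius_pow_apply,
    algebraMap_smul]

variable (F Ω) in
noncomputable def actEnd (f : R) : Module.End F Ω :=
  (T.basis.repr f).sum fun i a => LinearMap.mulLeft F (algebraMap k Ω a) * Frob ^ i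

theorem actEnd_apply (f : R) (x : Ω) : T.actEnd F Ω f x = T.act f x := by
  simp [actEnd, act, Finsupp.sum, LinearMap.sum_apply, frobenius_pow_apply]

theorem commute_actEnd_frobenius_pow [Fintype k] {n : ℕ}
    (hk : Fintype.card k = Fintype.card F ^ n) (f : R) : Commute (T.actEnd F Ω f) (Frob ^ n) :=
  Commute.sum_left _ _ _ fun _ _ =>
    (commute_mulLeft_frobenius_pow (by rw [← map_pow, ← hk, FiniteField.pow_card])).mul_left
      (Commute.pow_pow_self _ _ _)

end TwistedPolynomialRing

end Frobenius

theorem low_degree_invertible_on_torsion_general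
    {n s : ℕ}
    {F : Type} [Field F] [Fintype F] (hqcard : Fintype.card F = q)
    [Fintype k] [Algebra F k] (hk : Fintype.card k = q ^ n)
    (T : TwistedPolynomialRing q k R)
    {Ω : Type} [Field Ω] [Algebra k Ω]
    (p : Polynomial F) (hpirr : Irreducible p)
    (hpdeg : p.natDegree = s) :
    ∀ u : R, u ≠ 0 → (∀ i : ℕ, s ≤ i → T.basis.repr u i = 0) →
      ∀ β : Ω, β ≠ 0 →
        T.act (Polynomial.eval₂ (T.ι.comp (algebraMap F k)) (T.τ ^ n) p) β = 0 →
        T.act u β ≠ 0 := by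
  intro u hu hdeg β hβ hpβ huβ
  subst hqcard hpdeg
  let _ : Algebra F Ω := ((algebraMap k Ω).comp (algebraMap F k)).toAlgebra
  have : IsScalarTower F k Ω := IsScalarTower.of_algebraMap_eq fun _ => rfl
  have hq : 1 < Fintype.card F := Fintype.one_lt_card
  have hP : T.actPoly Ω u ≠ 0 := T.actPoly_ne_zero hq hu
  have hker : (LinearMap.ker (T.actEnd F Ω u) : Set Ω) = (T.actPoly Ω u).rootSet Ω := by
    ext x
    simp [mem_rootSet, hP, T.actEnd_apply, T.eval_actPoly]
  have hlower := pow_natDegree_le_ncard_ker (T.commute_actEnd_frobenius_pow hk u) hpirr hβ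
    (T.act_eval₂_τ_pow n p β ▸ hpβ) ((T.actEnd_apply u β).trans huβ)
    (hker ▸ rootSet_finite _ _)
  have hupper : ((T.actPoly Ω u).rootSet Ω).ncard < Fintype.card F ^ p.natDegree :=
    (ncard_rootSet_le _ Ω).trans_lt <|
      (natDegree_lt_iff_degree_lt hP).2 (mem_degreeLT.1 (T.actPoly_mem_degreeLT hq hdeg))
  rw [hker] at hlower
  exact hlower.not_gt hupper

/-- **Invertibility of low-degree twisted polynomials on `φ[p]` for `φ_T = τ^n`.**
Let `k = F_{q^n}`, `φ` the Drinfeld module with `φ_T = τ^n`, and `p ∈ F_q[T]` a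
monic irreducible polynomial of degree `s`, `p ≠ T`.  Then every nonzero `u ∈ R`
with `deg_τ u ≤ s - 1` acts invertibly on `φ[p]`: `u(β) ≠ 0` for every nonzero
root `β` of `φ_p(x)` in an algebraic closure `Ω` of `k`. -/
theorem low_degree_invertible_on_torsion
    {n s : ℕ} (hn : 0 < n) (hs : 0 < s)
    {F : Type} [Field F] [Fintype F] (hqcard : Fintype.card F = q)
    [Fintype k] [Algebra F k] (hk : Fintype.card k = q ^ n)
    (T : TwistedPolynomialRing q k R)
    {Ω : Type} [Field Ω] [Algebra k Ω] [IsAlgClosed Ω]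
    (p : Polynomial F) (hpmonic : p.Monic) (hpirr : Irreducible p)
    (hpdeg : p.natDegree = s) (hpT : p ≠ Polynomial.X) :
    ∀ u : R, u ≠ 0 → (∀ i : ℕ, s ≤ i → T.basis.repr u i = 0) →
      ∀ β : Ω, β ≠ 0 →
        T.act (Polynomial.eval₂ (T.ι.comp (algebraMap F k)) (T.τ ^ n) p) β = 0 →
        T.act u β ≠ 0 :=
  low_degree_invertible_on_torsion_general hqcard hk T p hpirr hpdeg
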